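/- arXiv:1609.00625 — 3 statements merged into one kernel-verified Lean document; each statement's English description precedes it below -/
import Mathlib

section
/- Let σ₁, σ₂ be irreducible complex representations of GL(2,𝔽_q). If the restriction of the external tensor product σ₁ ⊠ σ₂ to the subgroup (GL(2,q)²)⁰ = {(a,b) | det a = det b} is reducible, then λ₀σ₁ ≅ σ₁ and λ₀σ₂ ≅ σ₂, where λ₀ is the unique nontrivial quadratic character of 𝔽_q^× (q odd) and λ₀σ denotes the twist (λ₀ ∘ det) ⊗ σ; in that case the restriction decomposes as a direct sum of two irreducible constituents of equal dimension. -/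
open Matrix TensorProduct

/-- The subgroup `(GL(2,q)²)⁰` of pairs with equal determinant. -/
def eqDetSubgroup (F : Type*) [Field F] [DecidableEq F] :
    Subgroup (GL (Fin 2) F × GL (Fin 2) F) where
  carrier := {x | Matrix.GeneralLinearGroup.det x.1 = Matrix.GeneralLinearGroup.det x.2}
  one_mem' := rfl
  mul_mem' := by
    intro a b ha hb
    simp only [Set.mem_setOf_eq, Prod.fst_mul, Prod.snd_mul, _root_.map_mul] at *
    rw [ha, hb]
  inv_mem' := by
    intro a ha
    simp only [Set.mem_setOf_eq, Prod.fst_inv, Prod.snd_inv, _root_.map_inv] at *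
    rw [ha]

/-- External tensor product of representations of two groups. -/
noncomputable def extProd {G₁ G₂ V₁ V₂ : Type*} [Group G₁] [Group G₂]
    [AddCommGroup V₁] [Module ℂ V₁] [AddCommGroup V₂] [Module ℂ V₂]
    (σ₁ : Representation ℂ G₁ V₁) (σ₂ : Representation ℂ G₂ V₂) :
    Representation ℂ (G₁ × G₂) (V₁ ⊗[ℂ] V₂) where
  toFun g := TensorProduct.map (σ₁ g.1) (σ₂ g.2)
  map_one' := by simp [TensorProduct.map_one]
  map_mul' g h := by
    simp only [Prod.fst_mul, Prod.snd_mul, _root_.map_mul]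
    exact TensorProduct.map_mul _ _ _ _

/-- A submodule invariant under a representation. -/
def IsSubrep {G V : Type*} [Group G] [AddCommGroup V] [Module ℂ V]
    (ρ : Representation ℂ G V) (W : Submodule ℂ V) : Prop :=
  ∀ g : G, ∀ v ∈ W, ρ g v ∈ W

/-- Irreducibility of a representation: no nontrivial invariant subspace. -/
def IsIrreducibleRep {G V : Type*} [Group G] [AddCommGroup V] [Module ℂ V]
    (ρ : Representation ℂ G V) : Prop :=
  Nontrivial V ∧ ∀ W : Submodule ℂ V, IsSubrep ρ W → W = ⊥ ∨ W = ⊤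

/-!
Write `π = σ₁ ⊠ σ₂`, `G = GL(2,q)²` and `H = (GL(2,q)²)⁰`. Slicing along either tensor factor and
Schur's lemma for `σ₁, σ₂` show that `End_G(π) = ℂ`, so `π` is irreducible. Pick `a` whose
determinant generates `𝔽_q^×` and put `g₀ = (a, 1)`: then `G = H⟨g₀⟩`, and `g₀² ∈ Z(G) H` since
`(1, u I)` is central with determinant ratio `u⁻²`. Hence conjugation by `π g₀` is an involution of
`End_H(π)` with fixed algebra `End_G(π) = ℂ`. If `π|_H` is reducible, an `H`-equivariant
projection that is not a scalar produces an `H`-equivariant `T` anticommuting with `π g₀`,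
normalised to `T² = 1`. Then `End_H(π) = ℂ ⊕ ℂ T`, which makes the `±1`-eigenspaces of `T`
irreducible, and `π g₀` swaps them. As `λ₀(det a) = -1`, `T` intertwines `π` with its twist by
`λ₀(det x / det y)`, and slicing `T` along one factor gives `λ₀σᵢ ≅ σᵢ`.
-/
theorem LinearMap.IsProj.eq_bot_or_eq_top_of_eq_smul_one {K V : Type*} [Field K]
    [AddCommGroup V] [Module K V] {W : Submodule K V} {c : K}
    (hW : LinearMap.IsProj W (c • 1 : Module.End K V)) :
    W = ⊥ ∨ W = ⊤ := by
  rcases eq_or_ne c 0 with rfl | hc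
  · exact Or.inl (hW.submodule_eq_bot_iff.2 (zero_smul K _))
  · refine Or.inr (eq_top_iff.2 fun v _ => ?_)
    simpa [hc] using W.smul_mem c⁻¹ (hW.map_mem v)

section Representation

variable {G V : Type*} [Group G] [AddCommGroup V] [Module ℂ V] {ρ : Representation ℂ G V}

theorem IsIrreducibleRep.isIrreducible (h : IsIrreducibleRep ρ) : ρ.IsIrreducible := by
  have := h.1
  have : Nontrivial (Subrepresentation ρ) :=
    ⟨⊥, ⊤, fun h' => bot_ne_top (congrArg Subrepresentation.toSubmodule h')⟩
  refine ⟨fun W => ?_⟩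
  rcases h.2 W.toSubmodule W.apply_mem_toSubmodule with hW | hW
  · exact Or.inl (Subrepresentation.toSubmodule_injective hW)
  · exact Or.inr (Subrepresentation.toSubmodule_injective hW)

theorem IsIrreducibleRep.exists_eq_smul_one [FiniteDimensional ℂ V] (h : IsIrreducibleRep ρ)
    {f : Module.End ℂ V} (hf : ∀ g, Commute f (ρ g)) : ∃ c : ℂ, f = c • 1 := by
  have := h.isIrreducible
  obtain ⟨c, hc⟩ :=
    Representation.IsIrreducible.algebraMap_intertwiningMap_bijective_of_isAlgClosed.2
      (⟨f, fun g => (hf g).eq⟩ : ρ.IntertwiningMap ρ)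
  exact ⟨c, (congrArg Representation.IntertwiningMap.toLinearMap hc).symm⟩

theorem IsIrreducibleRep.injective_of_semiconjBy (h : IsIrreducibleRep ρ) {f : Module.End ℂ V}
    (hf0 : f ≠ 0) (hf : ∀ g, ∃ c : ℂ, SemiconjBy f (ρ g) (c • ρ g)) : Function.Injective f := by
  rw [← LinearMap.ker_eq_bot]
  refine (h.2 _ fun g v hv => ?_).resolve_right fun htop => hf0 (LinearMap.ker_eq_top.1 htop)
  obtain ⟨c, hc⟩ := hf g
  rw [LinearMap.mem_ker] at hv ⊢
  rw [← Module.End.mul_apply, hc.eq]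
  simp [hv]

theorem exists_isProj_commute [Finite G] {W : Submodule ℂ V} (hW : IsSubrep ρ W) :
    ∃ Q : Module.End ℂ V, LinearMap.IsProj W Q ∧ ∀ g, Commute Q (ρ g) := by
  obtain ⟨C, hC⟩ := exists_isCompl (⟨W, hW⟩ : Subrepresentation ρ)
  have hWC : IsCompl W C.toSubmodule :=
    ⟨disjoint_iff.2 (congrArg Subrepresentation.toSubmodule hC.inf_eq_bot),
      codisjoint_iff.2 (congrArg Subrepresentation.toSubmodule hC.sup_eq_top)⟩
  refine ⟨W.projection C.toSubmodule hWC, ⟨W.projection_apply_mem hWC,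
    fun x hx => W.projection_apply_of_mem_left hWC hx⟩, fun g => ?_⟩
  refine LinearMap.IsIdempotentElem.commute_iff (Submodule.isIdempotentElem_projection hWC) |>.2
    ⟨?_, ?_⟩
  · rw [Submodule.range_projection]
    exact fun v hv => hW g v hv
  · rw [Submodule.ker_projection]
    exact fun v hv => C.apply_mem_toSubmodule g hv

theorem isIrreducibleRep_of_forall_commute [Finite G] [Nontrivial V]
    (h : ∀ f : Module.End ℂ V, (∀ g, Commute f (ρ g)) → ∃ c : ℂ, f = c • 1) :
    IsIrreducibleRep ρ := by
  refine ⟨inferInstance, fun W hW => ?_⟩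
  obtain ⟨Q, hQ, hQρ⟩ := exists_isProj_commute hW
  obtain ⟨c, rfl⟩ := h Q hQρ
  exact hQ.eq_bot_or_eq_top_of_eq_smul_one

end Representation

namespace TensorProduct

variable {R M N : Type*} [CommRing R] [AddCommGroup M] [Module R M] [AddCommGroup N] [Module R N]

noncomputable def sliceRight (φ : Module.Dual R N) : M ⊗[R] N →ₗ[R] M :=
  (TensorProduct.rid R M).toLinearMap ∘ₗ φ.lTensor M

@[simp] theorem sliceRight_tmul (φ : Module.Dual R N) (m : M) (n : N) :
    sliceRight φ (m ⊗ₜ n) = φ n • m := rfl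

theorem sliceRight_rTensor (φ : Module.Dual R N) (f : M →ₗ[R] M) (t : M ⊗[R] N) :
    sliceRight φ (f.rTensor N t) = f (sliceRight φ t) := by
  induction t using TensorProduct.induction_on <;> simp_all

theorem apply_sliceRight_comm (ψ : Module.Dual R M) (φ : Module.Dual R N) (t : M ⊗[R] N) :
    ψ (sliceRight φ t) = φ (sliceRight ψ (TensorProduct.comm R M N t)) := by
  induction t using TensorProduct.induction_on <;> simp_all [mul_comm]

theorem ext_sliceRight [Module.Free R N] {t t' : M ⊗[R] N}
    (h : ∀ φ : Module.Dual R N, sliceRight φ t = sliceRight φ t') : t = t' := by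
  classical
  let b := Module.Free.chooseBasis R N
  refine (equivFinsuppOfBasisRight b).injective (Finsupp.ext fun i => ?_)
  rw [equivFinsuppOfBasisRight_apply, equivFinsuppOfBasisRight_apply]
  exact h (b.coord i)

theorem conjAlgEquiv_comm_lTensor (f : Module.End R N) :
    (TensorProduct.comm R M N).conjAlgEquiv R (f.lTensor M) = f.rTensor M := by
  rw [LinearEquiv.conjAlgEquiv_apply, ← LinearMap.comm_comp_lTensor_comp_comm_eq]
  rfl

end TensorProduct

section Involution

variable {K V : Type*} [Field K] [AddCommGroup V] [Module K V] {T : Module.End K V}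

theorem isCompl_eigenspace_one_neg_one [NeZero (2 : K)] (hT : T * T = 1) :
    IsCompl (T.eigenspace 1) (T.eigenspace (-1)) := by
  have hTT : ∀ v, T (T v) = v := fun v => LinearMap.congr_fun hT v
  refine ⟨Submodule.disjoint_def.2 fun v h₁ h₂ => ?_, codisjoint_iff.2 (eq_top_iff.2 fun v _ => ?_)⟩
  · rw [Module.End.mem_eigenspace_iff] at h₁ h₂
    have hv : v = -v := by simpa using h₁.symm.trans h₂
    have h2v : (2 : K) • v = 0 := by rw [two_smul]; exact eq_neg_iff_add_eq_zero.1 hv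
    exact (smul_eq_zero.1 h2v).resolve_left two_ne_zero
  · refine Submodule.mem_sup.2 ⟨(2⁻¹ : K) • (v + T v), ?_, (2⁻¹ : K) • (v - T v), ?_, ?_⟩
    · simp [hTT, add_comm]
    · rw [Module.End.mem_eigenspace_iff]
      simp only [map_smul, map_sub, hTT]
      module
    · rw [← smul_add, add_add_sub_cancel, ← two_smul K, smul_smul, inv_mul_cancel₀ two_ne_zero,
        one_smul]

theorem apply_mem_eigenspace_neg {a : Module.End K V} (hTa : SemiconjBy T a (-a)) {ε : K} {v : V}
    (hv : v ∈ T.eigenspace ε) : a v ∈ T.eigenspace (-ε) := by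
  rw [Module.End.mem_eigenspace_iff] at hv ⊢
  rw [← Module.End.mul_apply, hTa.eq, neg_mul, LinearMap.neg_apply, Module.End.mul_apply, hv,
    map_smul, neg_smul]

theorem finrank_eigenspace_le [FiniteDimensional K V] {a : Module.End K V}
    (ha : Function.Injective a) (hTa : SemiconjBy T a (-a)) (ε : K) :
    Module.finrank K (T.eigenspace ε) ≤ Module.finrank K (T.eigenspace (-ε)) :=
  (Submodule.equivMapOfInjective a ha _).finrank_eq.trans_le <| Submodule.finrank_mono <|
    Submodule.map_le_iff_le_comap.2 fun _ hv => apply_mem_eigenspace_neg hTa hv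

end Involution

section ExtProd

variable {G₁ G₂ V₁ V₂ : Type*} [Group G₁] [Group G₂]
  [AddCommGroup V₁] [Module ℂ V₁] [AddCommGroup V₂] [Module ℂ V₂]
  {σ₁ : Representation ℂ G₁ V₁} {σ₂ : Representation ℂ G₂ V₂}

theorem extProd_apply_left (g : G₁) :
    extProd σ₁ σ₂ (g, 1) = (σ₁ g).rTensor V₂ := by
  simp [extProd, LinearMap.rTensor, Module.End.one_eq_id]

theorem extProd_apply_right (g : G₂) :
    extProd σ₁ σ₂ (1, g) = (σ₂ g).lTensor V₁ := by
  simp [extProd, LinearMap.lTensor, Module.End.one_eq_id]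

theorem IsIrreducibleRep.exists_sliceRight_eq_smul [FiniteDimensional ℂ V₁]
    (h₁ : IsIrreducibleRep σ₁) {f : Module.End ℂ (V₁ ⊗[ℂ] V₂)}
    (hf : ∀ g, Commute f ((σ₁ g).rTensor V₂)) (φ : Module.Dual ℂ V₂) (w : V₂) :
    ∃ c : ℂ, ∀ v, sliceRight φ (f (v ⊗ₜ w)) = c • v := by
  obtain ⟨c, hc⟩ := h₁.exists_eq_smul_one (f := sliceRight φ ∘ₗ f ∘ₗ (mk ℂ V₁ V₂).flip w)
    fun g => LinearMap.ext fun v => by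
      simpa [sliceRight_rTensor] using
        congrArg (sliceRight φ) (LinearMap.congr_fun (hf g) (v ⊗ₜ w))
  exact ⟨c, fun v => by simpa using LinearMap.congr_fun hc v⟩

theorem exists_eq_smul_one_of_commute_extProd [FiniteDimensional ℂ V₁] [FiniteDimensional ℂ V₂]
    (h₁ : IsIrreducibleRep σ₁) (h₂ : IsIrreducibleRep σ₂) {f : Module.End ℂ (V₁ ⊗[ℂ] V₂)}
    (hf : ∀ x, Commute f (extProd σ₁ σ₂ x)) : ∃ c : ℂ, f = c • 1 := by
  let e := TensorProduct.comm ℂ V₁ V₂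
  have hf₁ : ∀ g, Commute f ((σ₁ g).rTensor V₂) := fun g => by
    simpa [extProd_apply_left] using hf (g, 1)
  have hf₂ : ∀ g, Commute (e.conjAlgEquiv ℂ f) ((σ₂ g).rTensor V₁) := fun g => by
    simpa [extProd_apply_right, e, conjAlgEquiv_comm_lTensor] using
      (hf (1, g)).map (e.conjAlgEquiv ℂ)
  choose c hc using h₁.exists_sliceRight_eq_smul hf₁
  choose d hd using h₂.exists_sliceRight_eq_smul hf₂
  have := h₁.1
  obtain ⟨v₀, hv₀⟩ := exists_ne (0 : V₁)
  obtain ⟨ψ, hψ⟩ : ∃ ψ : Module.Dual ℂ V₁, ψ v₀ ≠ 0 := by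
    by_contra! h
    exact hv₀ ((Module.forall_dual_apply_eq_zero_iff ℂ v₀).1 h)
  -- pairing `f (v₀ ⊗ w)` with `ψ ⊗ φ` computes the scalar `c φ w` through both factors
  have key : ∀ φ w, c φ w * ψ v₀ = d ψ v₀ * φ w := fun φ w => by
    have hdw := hd ψ v₀ w
    simp only [LinearEquiv.conjAlgEquiv_apply, LinearMap.comp_apply, LinearEquiv.coe_coe,
      TensorProduct.comm_symm_tmul, e] at hdw
    simpa [hc, hdw, mul_comm] using apply_sliceRight_comm ψ φ (f (v₀ ⊗ₜ w))
  refine ⟨d ψ v₀ / ψ v₀, TensorProduct.ext' fun v w => ext_sliceRight fun φ => ?_⟩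
  rw [hc, LinearMap.smul_apply, Module.End.one_apply, LinearMap.map_smul, sliceRight_tmul,
    smul_smul]
  congr 1
  field_simp
  linear_combination key φ w

theorem isIrreducibleRep_extProd [Finite G₁] [Finite G₂] [FiniteDimensional ℂ V₁]
    [FiniteDimensional ℂ V₂] (h₁ : IsIrreducibleRep σ₁) (h₂ : IsIrreducibleRep σ₂) :
    IsIrreducibleRep (extProd σ₁ σ₂) := by
  have := h₁.1
  have := h₂.1
  exact isIrreducibleRep_of_forall_commute fun _ hf =>
    exists_eq_smul_one_of_commute_extProd h₁ h₂ hf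

theorem IsIrreducibleRep.exists_linearEquiv_of_semiconjBy_rTensor [FiniteDimensional ℂ V₁]
    (h₁ : IsIrreducibleRep σ₁) (c : G₁ → ℂ) {T : Module.End ℂ (V₁ ⊗[ℂ] V₂)} (hT : T ≠ 0)
    (hTσ : ∀ g, SemiconjBy T ((σ₁ g).rTensor V₂) (c g • (σ₁ g).rTensor V₂)) :
    ∃ e : V₁ ≃ₗ[ℂ] V₁, ∀ g v, e (σ₁ g v) = c g • σ₁ g (e v) := by
  obtain ⟨v₀, w₀, hvw⟩ : ∃ v w, T (v ⊗ₜ w) ≠ 0 := by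
    by_contra! h
    exact hT (TensorProduct.ext' fun v w => h v w)
  obtain ⟨φ, hφ⟩ : ∃ φ : Module.Dual ℂ V₂, sliceRight φ (T (v₀ ⊗ₜ w₀)) ≠ 0 := by
    by_contra! h
    exact hvw (ext_sliceRight fun φ => by rw [h, map_zero])
  let f := sliceRight φ ∘ₗ T ∘ₗ (mk ℂ V₁ V₂).flip w₀
  have hf : ∀ g, SemiconjBy f (σ₁ g) (c g • σ₁ g) := fun g => LinearMap.ext fun v => by
    simpa [f, sliceRight_rTensor] using
      congrArg (sliceRight φ) (LinearMap.congr_fun (hTσ g).eq (v ⊗ₜ w₀))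
  have hinj := h₁.injective_of_semiconjBy (f := f) (fun h0 => hφ (LinearMap.congr_fun h0 v₀))
    fun g => ⟨c g, hf g⟩
  exact ⟨LinearEquiv.ofInjectiveEndo f hinj, fun g v => LinearMap.congr_fun (hf g).eq v⟩

theorem IsIrreducibleRep.exists_linearEquiv_of_semiconjBy_lTensor [FiniteDimensional ℂ V₂]
    (h₂ : IsIrreducibleRep σ₂) (c : G₂ → ℂ) {T : Module.End ℂ (V₁ ⊗[ℂ] V₂)} (hT : T ≠ 0)
    (hTσ : ∀ g, SemiconjBy T ((σ₂ g).lTensor V₁) (c g • (σ₂ g).lTensor V₁)) :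
    ∃ e : V₂ ≃ₗ[ℂ] V₂, ∀ g v, e (σ₂ g v) = c g • σ₂ g (e v) := by
  let E := (TensorProduct.comm ℂ V₁ V₂).conjAlgEquiv ℂ
  refine h₂.exists_linearEquiv_of_semiconjBy_rTensor c (T := E T) (by simpa using hT) fun g => ?_
  simpa [E, conjAlgEquiv_comm_lTensor] using (hTσ g).map E

end ExtProd

/-- `Z(G) H` has index at most two in `G`, and `g₀` generates `G` modulo `H`. -/
structure Subgroup.IsIndexTwoModCenter {G : Type*} [Group G] (H : Subgroup G) (g₀ : G) : Prop where
  normal : H.Normal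
  exists_eq_mul_pow : ∀ x, ∃ h ∈ H, ∃ k : ℕ, x = h * g₀ ^ k
  exists_mul_sq_mem : ∃ z ∈ Subgroup.center G, z * g₀ ^ 2 ∈ H

section Clifford

variable {G V : Type*} [Group G] [AddCommGroup V] [Module ℂ V] {π : Representation ℂ G V}
  {H : Subgroup G} {g₀ : G}

theorem semiconjBy_apply_mul_pow {S : Module.End ℂ V} (hSH : ∀ h ∈ H, Commute S (π h)) {c : ℂ}
    (hSg : SemiconjBy S (π g₀) (c • π g₀)) {h : G} (hh : h ∈ H) (k : ℕ) :
    SemiconjBy S (π (h * g₀ ^ k)) (c ^ k • π (h * g₀ ^ k)) := by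
  have := (hSH h hh).semiconjBy.mul_right (hSg.pow_right k)
  rwa [smul_pow, mul_smul_comm, ← map_pow, ← map_mul] at this

theorem isSubrep_eigenspace {T : Module.End ℂ V} (hTH : ∀ h ∈ H, Commute T (π h)) (ε : ℂ) :
    IsSubrep (π.comp H.subtype) (T.eigenspace ε) := fun h v hv => by
  rw [Module.End.mem_eigenspace_iff] at hv ⊢
  simp only [MonoidHom.coe_comp, Subgroup.coe_subtype, Function.comp_apply]
  rw [← Module.End.mul_apply, (hTH h h.2).eq, Module.End.mul_apply, hv, map_smul]

namespace Subgroup.IsIndexTwoModCenter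

theorem commute_apply (hG : H.IsIndexTwoModCenter g₀) {S : Module.End ℂ V}
    (hSH : ∀ h ∈ H, Commute S (π h)) (hSg : Commute S (π g₀)) (x : G) : Commute S (π x) := by
  obtain ⟨h, hh, k, rfl⟩ := hG.exists_eq_mul_pow x
  simpa [Commute] using semiconjBy_apply_mul_pow hSH (c := 1) (by simpa using hSg.semiconjBy) hh k

theorem exists_semiconjBy_apply (hG : H.IsIndexTwoModCenter g₀) {S : Module.End ℂ V}
    (hSH : ∀ h ∈ H, Commute S (π h)) (hSg : SemiconjBy S (π g₀) (-π g₀)) (x : G) :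
    ∃ c : ℂ, SemiconjBy S (π x) (c • π x) := by
  obtain ⟨h, hh, k, rfl⟩ := hG.exists_eq_mul_pow x
  exact ⟨_, semiconjBy_apply_mul_pow hSH (c := -1) (by simpa using hSg) hh k⟩

theorem semiconjBy_apply_of_character (hG : H.IsIndexTwoModCenter g₀) {S : Module.End ℂ V}
    (hSH : ∀ h ∈ H, Commute S (π h)) (hSg : SemiconjBy S (π g₀) (-π g₀)) (χ : G →* ℂˣ)
    (hχH : H ≤ χ.ker) (hχg : (χ g₀ : ℂ) = -1) (x : G) : SemiconjBy S (π x) ((χ x : ℂ) • π x) := by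
  obtain ⟨h, hh, k, rfl⟩ := hG.exists_eq_mul_pow x
  have hχx : (χ (h * g₀ ^ k) : ℂ) = (-1) ^ k := by
    rw [map_mul, map_pow, hχH hh, one_mul, Units.val_pow_eq_pow_val, hχg]
  rw [hχx]
  exact semiconjBy_apply_mul_pow hSH (by simpa using hSg) hh k

theorem commute_conj (hG : H.IsIndexTwoModCenter g₀) {S : Module.End ℂ V}
    (hSH : ∀ h ∈ H, Commute S (π h)) :
    ∀ h ∈ H, Commute (π g₀ * S * π g₀⁻¹) (π h) := by
  intro h hh
  have hh' := hG.normal.conj_mem h hh g₀⁻¹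
  rw [inv_inv] at hh'
  refine LinearMap.ext fun v => ?_
  have := LinearMap.congr_fun (hSH _ hh') (π g₀⁻¹ v)
  simp only [Module.End.mul_apply, map_mul, Representation.self_inv_apply] at this ⊢
  simp [this]

theorem commute_sq (hG : H.IsIndexTwoModCenter g₀) [FiniteDimensional ℂ V]
    (hπ : IsIrreducibleRep π) {S : Module.End ℂ V} (hSH : ∀ h ∈ H, Commute S (π h)) :
    Commute S (π g₀ ^ 2) := by
  obtain ⟨z, hz, hzg⟩ := hG.exists_mul_sq_mem
  obtain ⟨c, hc⟩ := hπ.exists_eq_smul_one (f := π z⁻¹) fun x => by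
    rw [Commute, SemiconjBy, ← map_mul, ← map_mul, Subgroup.mem_center_iff.1 (inv_mem hz) x]
  have : π g₀ ^ 2 = c • π (z * g₀ ^ 2) := by
    rw [← smul_one_mul, ← hc, ← map_mul, ← map_pow, inv_mul_cancel_left]
  rw [this]
  exact (hSH _ hzg).smul_right c

theorem semiconjBy_sub_conj (hG : H.IsIndexTwoModCenter g₀) [FiniteDimensional ℂ V]
    (hπ : IsIrreducibleRep π) {S : Module.End ℂ V} (hSH : ∀ h ∈ H, Commute S (π h)) :
    SemiconjBy (S - π g₀ * S * π g₀⁻¹) (π g₀) (-π g₀) := by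
  have hsq := hG.commute_sq hπ hSH
  refine LinearMap.ext fun v => ?_
  have := LinearMap.congr_fun hsq.eq (π g₀⁻¹ v)
  simp only [pow_two, Module.End.mul_apply, Representation.self_inv_apply] at this
  simp [this]

theorem commute_add_conj (hG : H.IsIndexTwoModCenter g₀) [FiniteDimensional ℂ V]
    (hπ : IsIrreducibleRep π) {S : Module.End ℂ V} (hSH : ∀ h ∈ H, Commute S (π h)) :
    Commute (S + π g₀ * S * π g₀⁻¹) (π g₀) := by
  have hsq := hG.commute_sq hπ hSH
  refine LinearMap.ext fun v => ?_
  have := LinearMap.congr_fun hsq.eq (π g₀⁻¹ v)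
  simp only [pow_two, Module.End.mul_apply, Representation.self_inv_apply] at this
  simp [this, add_comm]

theorem exists_eq_smul_one_add_smul (hG : H.IsIndexTwoModCenter g₀) [FiniteDimensional ℂ V]
    (hπ : IsIrreducibleRep π) {T : Module.End ℂ V} (hTH : ∀ h ∈ H, Commute T (π h))
    (hTg : SemiconjBy T (π g₀) (-π g₀)) (hT2 : T * T = 1) {S : Module.End ℂ V}
    (hSH : ∀ h ∈ H, Commute S (π h)) : ∃ α β : ℂ, S = α • 1 + β • T := by
  obtain ⟨p, hp⟩ := hπ.exists_eq_smul_one <| hG.commute_apply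
    (fun h hh => (hSH h hh).add_left (hG.commute_conj hSH h hh)) (hG.commute_add_conj hπ hSH)
  obtain ⟨q, hq⟩ := hπ.exists_eq_smul_one <| hG.commute_apply
    (fun h hh => ((hSH h hh).sub_left (hG.commute_conj hSH h hh)).mul_left (hTH h hh))
    (by simpa [Commute] using (hG.semiconjBy_sub_conj hπ hSH).neg_right.mul_left hTg)
  have hq' : S - π g₀ * S * π g₀⁻¹ = q • T := by
    rw [← mul_one (S - _), ← hT2, ← mul_assoc, hq, smul_mul_assoc, one_mul]
  exact ⟨p / 2, q / 2, by linear_combination (norm := module) (2⁻¹ : ℂ) • hp + (2⁻¹ : ℂ) • hq'⟩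

theorem exists_involution_of_not_isIrreducibleRep (hG : H.IsIndexTwoModCenter g₀) [Finite G]
    [FiniteDimensional ℂ V] (hπ : IsIrreducibleRep π)
    (hred : ¬ IsIrreducibleRep (π.comp H.subtype)) :
    ∃ T : Module.End ℂ V, (∀ h ∈ H, Commute T (π h)) ∧ SemiconjBy T (π g₀) (-π g₀) ∧
      T * T = 1 := by
  have := hπ.1
  obtain ⟨W, hW, hW₀, hW₁⟩ : ∃ W, IsSubrep (π.comp H.subtype) W ∧ W ≠ ⊥ ∧ W ≠ ⊤ := by
    by_contra! h
    exact hred ⟨inferInstance, fun W hW => or_iff_not_imp_left.2 (h W hW)⟩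
  obtain ⟨Q, hQ, hQH⟩ := exists_isProj_commute hW
  replace hQH : ∀ h ∈ H, Commute Q (π h) := fun h hh => hQH ⟨h, hh⟩
  set S := Q - π g₀ * Q * π g₀⁻¹
  have hSH : ∀ h ∈ H, Commute S (π h) := fun h hh =>
    (hQH h hh).sub_left (hG.commute_conj hQH h hh)
  have hSg : SemiconjBy S (π g₀) (-π g₀) := hG.semiconjBy_sub_conj hπ hQH
  -- `S = 0` would make `Q` commute with all of `π`, hence be `0` or `1`
  have hS : S ≠ 0 := fun hS => by
    have hQg : Commute Q (π g₀) := calc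
      Q * π g₀ = π g₀ * Q * π g₀⁻¹ * π g₀ := by rw [← sub_eq_zero.1 hS]
      _ = π g₀ * Q := by rw [mul_assoc _ (π g₀⁻¹), ← map_mul, inv_mul_cancel, map_one, mul_one]
    obtain ⟨c, rfl⟩ := hπ.exists_eq_smul_one (hG.commute_apply hQH hQg)
    exact hQ.eq_bot_or_eq_top_of_eq_smul_one.elim hW₀ hW₁
  have hSinj := hπ.injective_of_semiconjBy hS (hG.exists_semiconjBy_apply hSH hSg)
  obtain ⟨c, hc⟩ := hπ.exists_eq_smul_one <| hG.commute_apply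
    (fun h hh => (hSH h hh).mul_left (hSH h hh))
    (by simpa [Commute] using hSg.neg_right.mul_left hSg)
  have hc₀ : c ≠ 0 := by
    rintro rfl
    exact hS (LinearMap.ext fun v => hSinj (by simpa using LinearMap.congr_fun hc v))
  obtain ⟨s, hs⟩ := IsAlgClosed.exists_pow_nat_eq c two_pos
  have hs₀ : s ≠ 0 := by rintro rfl; simp [← hs] at hc₀
  refine ⟨s⁻¹ • S, fun h hh => (hSH h hh).smul_left _, hSg.smul_left _, ?_⟩
  rw [smul_mul_smul_comm, hc, smul_smul, ← hs]
  field_simp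
  simp


theorem eq_bot_or_eq_eigenspace (hG : H.IsIndexTwoModCenter g₀) [Finite G]
    [FiniteDimensional ℂ V] (hπ : IsIrreducibleRep π) {T : Module.End ℂ V}
    (hTH : ∀ h ∈ H, Commute T (π h)) (hTg : SemiconjBy T (π g₀) (-π g₀)) (hT2 : T * T = 1)
    {ε : ℂ} {U : Submodule ℂ V} (hU : IsSubrep (π.comp H.subtype) U) (hUT : U ≤ T.eigenspace ε) :
    U = ⊥ ∨ U = T.eigenspace ε := by
  refine or_iff_not_imp_left.2 fun hU₀ => ?_
  obtain ⟨Q, hQ, hQH⟩ := exists_isProj_commute hU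
  obtain ⟨α, β, hQT⟩ :=
    hG.exists_eq_smul_one_add_smul hπ hTH hTg hT2 fun h hh => hQH ⟨h, hh⟩
  have hQε : ∀ v ∈ T.eigenspace ε, Q v = (α + β * ε) • v := fun v hv => by
    rw [Module.End.mem_eigenspace_iff] at hv
    simp [hQT, hv, add_smul, smul_smul]
  obtain ⟨u, hu, hu₀⟩ := Submodule.exists_mem_ne_zero_of_ne_bot hU₀
  have h₁ : α + β * ε = 1 :=
    smul_left_injective ℂ hu₀ (by simpa [hQ.map_id u hu] using (hQε u (hUT hu)).symm)
  refine le_antisymm hUT fun v hv => ?_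
  simpa [hQε v hv, h₁] using hQ.map_mem v

theorem exists_isCompl_irreducible_of_involution (hG : H.IsIndexTwoModCenter g₀) [Finite G]
    [FiniteDimensional ℂ V] (hπ : IsIrreducibleRep π) {T : Module.End ℂ V}
    (hTH : ∀ h ∈ H, Commute T (π h)) (hTg : SemiconjBy T (π g₀) (-π g₀)) (hT2 : T * T = 1) :
    ∃ W₁ W₂ : Submodule ℂ V,
      IsSubrep (π.comp H.subtype) W₁ ∧ IsSubrep (π.comp H.subtype) W₂ ∧ IsCompl W₁ W₂ ∧
      Module.finrank ℂ W₁ = Module.finrank ℂ W₂ ∧ W₁ ≠ ⊥ ∧ W₂ ≠ ⊥ ∧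
      (∀ U : Submodule ℂ V, IsSubrep (π.comp H.subtype) U → U ≤ W₁ → U = ⊥ ∨ U = W₁) ∧
      (∀ U : Submodule ℂ V, IsSubrep (π.comp H.subtype) U → U ≤ W₂ → U = ⊥ ∨ U = W₂) := by
  have := hπ.1
  have hcompl := isCompl_eigenspace_one_neg_one hT2
  have hinj := (π.apply_bijective g₀).1
  have hrank : Module.finrank ℂ (T.eigenspace 1) = Module.finrank ℂ (T.eigenspace (-1)) := by
    have := finrank_eigenspace_le hinj hTg (-1)
    rw [neg_neg] at this
    exact (finrank_eigenspace_le hinj hTg 1).antisymm this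
  have hsum := Submodule.finrank_add_eq_of_isCompl hcompl
  have hpos := Module.finrank_pos (R := ℂ) (M := V)
  refine ⟨_, _, isSubrep_eigenspace hTH 1, isSubrep_eigenspace hTH (-1), hcompl, hrank,
    fun h => ?_, fun h => ?_, fun U hU => hG.eq_bot_or_eq_eigenspace hπ hTH hTg hT2 hU,
    fun U hU => hG.eq_bot_or_eq_eigenspace hπ hTH hTg hT2 hU⟩ <;>
  · rw [h, finrank_bot] at hrank hsum
    omega

end Subgroup.IsIndexTwoModCenter

end Clifford

theorem MonoidHom.val_apply_generator_eq_neg_one {K : Type*} [Group K] {u : K}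
    (hu : ∀ x, x ∈ Subgroup.zpowers u) {χ : K →* ℂˣ} (hχ : χ ≠ 1) (hχsq : ∀ x, χ x ^ 2 = 1) :
    (χ u : ℂ) = -1 := by
  refine (mul_self_eq_one_iff.1 ?_).resolve_left fun h₁ => hχ ?_
  · rw [← Units.val_mul, ← sq, hχsq, Units.val_one]
  · refine MonoidHom.eq_of_eqOn_dense (s := {u}) ?_ ?_
    · rw [← Subgroup.zpowers_eq_closure, eq_top_iff]
      exact fun x _ => hu x
    · exact fun x hx => by rw [Set.mem_singleton_iff.1 hx]; exact Units.ext h₁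

section EqDet

variable {F : Type*} [Field F]

noncomputable def detRatio (F : Type*) [Field F] :
    GL (Fin 2) F × GL (Fin 2) F →* Fˣ :=
  GeneralLinearGroup.det.comp (MonoidHom.fst _ _) / GeneralLinearGroup.det.comp (MonoidHom.snd _ _)

@[simp] theorem detRatio_apply (x : GL (Fin 2) F × GL (Fin 2) F) :
    detRatio F x = GeneralLinearGroup.det x.1 / GeneralLinearGroup.det x.2 := rfl

theorem eqDetSubgroup_eq_ker [DecidableEq F] : eqDetSubgroup F = (detRatio F).ker := by
  ext x
  exact div_eq_one.symm

theorem isIndexTwoModCenter_eqDetSubgroup [DecidableEq F] [Finite F] {u : Fˣ}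
    (hu : ∀ x, x ∈ Subgroup.zpowers u) {a : GL (Fin 2) F} (ha : GeneralLinearGroup.det a = u) :
    (eqDetSubgroup F).IsIndexTwoModCenter (a, 1) where
  normal := eqDetSubgroup_eq_ker (F := F) ▸ (detRatio F).normal_ker
  exists_eq_mul_pow x := by
    obtain ⟨k, hk⟩ := mem_powers_iff_mem_zpowers.2 (hu (detRatio F x))
    refine ⟨x * ((a, 1) ^ k)⁻¹, ?_, k, by group⟩
    rw [eqDetSubgroup_eq_ker, MonoidHom.mem_ker, map_mul, map_inv, map_pow, ← hk]
    simp [ha]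
  exists_mul_sq_mem := by
    refine ⟨(1, GeneralLinearGroup.scalar (Fin 2) u), ?_, ?_⟩
    · rw [Subgroup.center_prod, GeneralLinearGroup.center_eq_range_scalar]
      exact ⟨Subgroup.one_mem _, u, rfl⟩
    · rw [eqDetSubgroup_eq_ker, MonoidHom.mem_ker]
      simp [ha]

end EqDet

theorem stmt4_general {F : Type*} [Field F] [Fintype F] [DecidableEq F]
    {V₁ V₂ : Type*} [AddCommGroup V₁] [Module ℂ V₁] [FiniteDimensional ℂ V₁]
    [AddCommGroup V₂] [Module ℂ V₂] [FiniteDimensional ℂ V₂]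
    (σ₁ : Representation ℂ (GL (Fin 2) F) V₁) (σ₂ : Representation ℂ (GL (Fin 2) F) V₂)
    (h₁ : IsIrreducibleRep σ₁) (h₂ : IsIrreducibleRep σ₂)
    (lam0 : Fˣ →* ℂˣ) (hlamne : lam0 ≠ 1) (hlamsq : ∀ x : Fˣ, (lam0 x) ^ 2 = 1)
    -- the restriction of `σ₁ ⊠ σ₂` to `(GL(2,q)²)⁰` is reducible:
    (hred : ¬ IsIrreducibleRep
      ((extProd σ₁ σ₂).comp (eqDetSubgroup F).subtype)) :
    -- `lam0σ₁ ≅ σ₁`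
    (∃ e : V₁ ≃ₗ[ℂ] V₁, ∀ (g : GL (Fin 2) F) (v : V₁),
      e (σ₁ g v) = (lam0 (Matrix.GeneralLinearGroup.det g) : ℂ) • σ₁ g (e v)) ∧
    -- `lam0σ₂ ≅ σ₂`
    (∃ e : V₂ ≃ₗ[ℂ] V₂, ∀ (g : GL (Fin 2) F) (v : V₂),
      e (σ₂ g v) = (lam0 (Matrix.GeneralLinearGroup.det g) : ℂ) • σ₂ g (e v)) ∧
    -- the restriction splits as a direct sum of two irreducible constituents of
    -- equal dimension
    (∃ W₁ W₂ : Submodule ℂ (V₁ ⊗[ℂ] V₂),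
      IsSubrep ((extProd σ₁ σ₂).comp (eqDetSubgroup F).subtype) W₁ ∧
      IsSubrep ((extProd σ₁ σ₂).comp (eqDetSubgroup F).subtype) W₂ ∧
      IsCompl W₁ W₂ ∧
      Module.finrank ℂ W₁ = Module.finrank ℂ W₂ ∧
      W₁ ≠ ⊥ ∧ W₂ ≠ ⊥ ∧
      (∀ U : Submodule ℂ (V₁ ⊗[ℂ] V₂),
        IsSubrep ((extProd σ₁ σ₂).comp (eqDetSubgroup F).subtype) U →
          U ≤ W₁ → U = ⊥ ∨ U = W₁) ∧
      (∀ U : Submodule ℂ (V₁ ⊗[ℂ] V₂),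
        IsSubrep ((extProd σ₁ σ₂).comp (eqDetSubgroup F).subtype) U →
          U ≤ W₂ → U = ⊥ ∨ U = W₂)) := by
  obtain ⟨u, hu⟩ := IsCyclic.exists_generator (α := Fˣ)
  obtain ⟨a, ha⟩ := GeneralLinearGroup.det_surjective (n := Fin 2) u
  have hG := isIndexTwoModCenter_eqDetSubgroup hu ha
  have hπ := isIrreducibleRep_extProd h₁ h₂
  obtain ⟨T, hTH, hTg, hT2⟩ := hG.exists_involution_of_not_isIrreducibleRep hπ hred
  have hT := hG.semiconjBy_apply_of_character hTH hTg (lam0.comp (detRatio F))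
    (eqDetSubgroup_eq_ker (F := F) ▸ (detRatio F).ker_le_comap lam0.ker)
    (by simpa [ha] using lam0.val_apply_generator_eq_neg_one hu hlamne hlamsq)
  have hT₀ : T ≠ 0 := by
    have := hπ.1
    rintro rfl
    simp at hT2
  refine ⟨?_, ?_, hG.exists_isCompl_irreducible_of_involution hπ hTH hTg hT2⟩
  · exact h₁.exists_linearEquiv_of_semiconjBy_rTensor _ hT₀ fun g => by
      simpa [extProd_apply_left] using hT (g, 1)
  · refine h₂.exists_linearEquiv_of_semiconjBy_lTensor _ hT₀ fun g => ?_
    have hinv : lam0 (GeneralLinearGroup.det g)⁻¹ = lam0 (GeneralLinearGroup.det g) := by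
      rw [map_inv, inv_eq_of_mul_eq_one_left (by rw [← sq, hlamsq])]
    simpa [extProd_apply_right, hinv] using hT (1, g)

/-- If the restriction of `σ₁ ⊠ σ₂` (with `σ₁, σ₂` irreducible representations of
`GL(2,𝔽_q)`, `q` odd) to the equal-determinant subgroup `(GL(2,q)²)⁰` is reducible,
then `lam0σ₁ ≅ σ₁` and `lam0σ₂ ≅ σ₂` for the nontrivial quadratic character `lam0` of
`𝔽_q^×`, and the restriction splits as a direct sum of two irreducible constituents
of equal dimension. -/
theorem stmt4 {F : Type*} [Field F] [Fintype F] [DecidableEq F]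
    (hodd : Odd (Fintype.card F))
    {V₁ V₂ : Type*} [AddCommGroup V₁] [Module ℂ V₁] [FiniteDimensional ℂ V₁]
    [AddCommGroup V₂] [Module ℂ V₂] [FiniteDimensional ℂ V₂]
    (σ₁ : Representation ℂ (GL (Fin 2) F) V₁) (σ₂ : Representation ℂ (GL (Fin 2) F) V₂)
    (h₁ : IsIrreducibleRep σ₁) (h₂ : IsIrreducibleRep σ₂)
    (lam0 : Fˣ →* ℂˣ) (hlamne : lam0 ≠ 1) (hlamsq : ∀ x : Fˣ, (lam0 x) ^ 2 = 1)
    -- the restriction of `σ₁ ⊠ σ₂` to `(GL(2,q)²)⁰` is reducible: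
    (hred : ¬ IsIrreducibleRep
      ((extProd σ₁ σ₂).comp (eqDetSubgroup F).subtype)) :
    -- `lam0σ₁ ≅ σ₁`
    (∃ e : V₁ ≃ₗ[ℂ] V₁, ∀ (g : GL (Fin 2) F) (v : V₁),
      e (σ₁ g v) = (lam0 (Matrix.GeneralLinearGroup.det g) : ℂ) • σ₁ g (e v)) ∧
    -- `lam0σ₂ ≅ σ₂`
    (∃ e : V₂ ≃ₗ[ℂ] V₂, ∀ (g : GL (Fin 2) F) (v : V₂),
      e (σ₂ g v) = (lam0 (Matrix.GeneralLinearGroup.det g) : ℂ) • σ₂ g (e v)) ∧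
    -- the restriction splits as a direct sum of two irreducible constituents of
    -- equal dimension
    (∃ W₁ W₂ : Submodule ℂ (V₁ ⊗[ℂ] V₂),
      IsSubrep ((extProd σ₁ σ₂).comp (eqDetSubgroup F).subtype) W₁ ∧
      IsSubrep ((extProd σ₁ σ₂).comp (eqDetSubgroup F).subtype) W₂ ∧
      IsCompl W₁ W₂ ∧
      Module.finrank ℂ W₁ = Module.finrank ℂ W₂ ∧
      W₁ ≠ ⊥ ∧ W₂ ≠ ⊥ ∧
      (∀ U : Submodule ℂ (V₁ ⊗[ℂ] V₂),
        IsSubrep ((extProd σ₁ σ₂).comp (eqDetSubgroup F).subtype) U →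
          U ≤ W₁ → U = ⊥ ∨ U = W₁) ∧
      (∀ U : Submodule ℂ (V₁ ⊗[ℂ] V₂),
        IsSubrep ((extProd σ₁ σ₂).comp (eqDetSubgroup F).subtype) U →
          U ≤ W₂ → U = ⊥ ∨ U = W₂)) :=
  stmt4_general σ₁ σ₂ h₁ h₂ lam0 hlamne hlamsq hred
end

section
/- Let G be a finite group, H ≤ G a subgroup with G = H·K for a subgroup K ≤ G. Then restriction of functions to K defines a K-equivariant linear isomorphism from the induced representation Ind_H^G(σ) onto Ind_{H∩K}^K(σ|_{H∩K}). -/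
/-- The space of the induced representation `Ind_H^G σ` as functions `G → V`. -/
def indSpace {G V : Type*} [Group G] [AddCommGroup V] [Module ℂ V] (H : Subgroup G)
    (σ : Representation ℂ H V) : Submodule ℂ (G → V) where
  carrier := {f | ∀ (h : H) (g : G), f ((h : G) * g) = σ h (f g)}
  add_mem' := by intro a b ha hb h g; simp [ha h g, hb h g]
  zero_mem' := by intro h g; simp
  smul_mem' := by intro c a ha h g; simp [ha h g]

/-- The space of `Ind_{H∩K}^K (σ|_{H∩K})` as functions `K → V`. -/
def indSpaceRes {G V : Type*} [Group G] [AddCommGroup V] [Module ℂ V]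
    (H K : Subgroup G) (σ : Representation ℂ H V) : Submodule ℂ (K → V) where
  carrier := {f | ∀ (x : G) (hx1 : x ∈ H) (hx2 : x ∈ K) (k : K),
    f (⟨x, hx2⟩ * k) = σ ⟨x, hx1⟩ (f k)}
  add_mem' := by intro a b ha hb x hx1 hx2 k; simp [ha x hx1 hx2 k, hb x hx1 hx2 k]
  zero_mem' := by intro x hx1 hx2 k; simp
  smul_mem' := by intro c a ha x hx1 hx2 k; simp [ha x hx1 hx2 k]

/-- If `G = HK` for a finite group `G`, restriction of functions to `K` gives a
`K`-equivariant linear isomorphism `Ind_H^G σ ≅ Ind_{H∩K}^K (σ|_{H∩K})`. -/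
theorem stmt10 {G V : Type*} [Group G] [Finite G] [AddCommGroup V] [Module ℂ V]
    (H K : Subgroup G) (σ : Representation ℂ H V)
    (hHK : ∀ g : G, ∃ h ∈ H, ∃ k ∈ K, g = h * k) :
    ∃ e : indSpace H σ ≃ₗ[ℂ] indSpaceRes H K σ,
      -- `e` is restriction of functions to `K`
      (∀ (f : indSpace H σ) (k : K), (e f : K → V) k = (f : G → V) (k : G)) ∧
      -- `e` is `K`-equivariant for the right translation actions
      (∀ (f : indSpace H σ) (k₀ : K)
        (hf' : (fun g => (f : G → V) (g * (k₀ : G))) ∈ indSpace H σ) (k : K),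
        (e ⟨fun g => (f : G → V) (g * (k₀ : G)), hf'⟩ : K → V) k
          = (e f : K → V) (k * k₀)) := by
  classical
  have memres : ∀ f : indSpace H σ, (fun k : K => (f : G → V) k) ∈ indSpaceRes H K σ := by
    intro f x hx1 hx2 k
    exact f.2 ⟨x, hx1⟩ k
  let L : indSpace H σ →ₗ[ℂ] indSpaceRes H K σ :=
    { toFun := fun f => ⟨fun k => (f : G → V) k, memres f⟩
      map_add' := by intro f g; rfl
      map_smul' := by intro c f; rfl }
  -- key well-definedness lemma
  have key : ∀ F : indSpaceRes H K σ, ∀ (h h' : H) (k k' : K),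
      (h : G) * k = (h' : G) * k' →
      σ h ((F : K → V) k) = σ h' ((F : K → V) k') := by
    intro F h h' k k' heq
    have hx1 : ((h' : G)⁻¹ * h) ∈ H := mul_mem (inv_mem h'.2) h.2
    have hxeq : ((h' : G)⁻¹ * h) = (k' : G) * (k : G)⁻¹ := by
      rw [inv_mul_eq_iff_eq_mul, ← mul_assoc, eq_mul_inv_iff_mul_eq]
      exact heq
    have hx2 : ((h' : G)⁻¹ * h) ∈ K := by
      rw [hxeq]; exact mul_mem k'.2 (inv_mem k.2)
    have hk' : (⟨(h' : G)⁻¹ * h, hx2⟩ * k : K) = k' := by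
      ext
      show ((h' : G)⁻¹ * h) * k = (k' : G)
      rw [hxeq, mul_assoc, inv_mul_cancel, mul_one]
    have hF := F.2 ((h' : G)⁻¹ * h) hx1 hx2 k
    rw [hk'] at hF
    rw [hF]
    have : σ h' (σ ⟨(h' : G)⁻¹ * h, hx1⟩ ((F : K → V) k))
        = σ (h' * ⟨(h' : G)⁻¹ * h, hx1⟩) ((F : K → V) k) := by
      rw [map_mul]; rfl
    have hhh : h' * (⟨(h' : G)⁻¹ * h, hx1⟩ : H) = h := Subtype.ext (by simp)
    rw [this, hhh]
  have hinj : Function.Injective L := by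
    intro f1 f2 hEq
    ext g
    obtain ⟨h, hh, k, hk, rfl⟩ := hHK g
    have h1 := f1.2 ⟨h, hh⟩ k
    have h2 := f2.2 ⟨h, hh⟩ k
    show (f1 : G → V) (h * k) = (f2 : G → V) (h * k)
    rw [h1, h2]
    have : (L f1 : K → V) ⟨k, hk⟩ = (L f2 : K → V) ⟨k, hk⟩ := by rw [hEq]
    exact congrArg _ this
  have hsurj : Function.Surjective L := by
    intro F
    choose hc hch kc hck hg using hHK
    refine ⟨⟨fun g => σ ⟨hc g, hch g⟩ ((F : K → V) ⟨kc g, hck g⟩), ?_⟩, ?_⟩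
    · intro a g
      have hmul : σ a (σ ⟨hc g, hch g⟩ ((F : K → V) ⟨kc g, hck g⟩))
          = σ (a * ⟨hc g, hch g⟩) ((F : K → V) ⟨kc g, hck g⟩) := by
        rw [map_mul]; rfl
      show σ ⟨hc ((a : G) * g), hch _⟩ ((F : K → V) ⟨kc ((a : G) * g), hck _⟩) = _
      rw [hmul]
      apply key
      show hc ((a : G) * g) * kc ((a : G) * g) = ((a : G) * hc g) * kc g
      rw [mul_assoc, ← hg g, ← hg ((a : G) * g)]
    · ext k
      show σ ⟨hc (k : G), hch _⟩ ((F : K → V) ⟨kc (k : G), hck _⟩) = (F : K → V) k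
      have := key F ⟨hc (k : G), hch _⟩ 1 ⟨kc (k : G), hck _⟩ k
        (by simpa using (hg (k : G)).symm)
      rw [this, map_one]
      rfl
  refine ⟨LinearEquiv.ofBijective L ⟨hinj, hsurj⟩, fun f k => rfl, fun f k₀ hf' k => ?_⟩
  show (f : G → V) ((k : G) * k₀) = (f : G → V) ((k * k₀ : K) : G)
  rfl
end

section
/- Let q be a prime power. The parabolic induction μ₁ × μ₂ := Ind_B^{GL(2,𝔽_q)}(μ₁ ⊠ μ₂) from the Borel subgroup B of upper triangular matrices, where the character sends diag-part (a,d) to μ₁(a)μ₂(d), has dimension q+1; it is irreducible if and only if μ₁ ≠ μ₂, and for μ₁ = μ₂ it decomposes as the direct sum of a one-dimensional representation (μ₁∘det) and a q-dimensional representation. -/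
/-!
The cosets `B g` are classified by the bottom row of `g` up to scaling, i.e. by a point of
`P¹(𝔽_q)`, so a vector of `μ₁ × μ₂` is determined by its `q + 1` values at coset
representatives. If `μ₁ ≠ μ₂`, a vector on which `B` acts on the right through `μ₁ ⊠ μ₂`
vanishes at the Weyl element `w` (because `w · diag(a, 1) = diag(1, a) · w`), hence on the whole
big cell, so it is a multiple of the delta function on `B`. Averaging over `B` produces such a
vector, nonzero, inside any nonzero invariant subspace, which therefore contains the delta
function on `B` together with its translates, i.e. everything. If `μ₁ = μ₂ = μ`, the
character `μ ∘ det` lies in `μ × μ`, and the kernel of the invariant functional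
`f ↦ ∑ g, f g (μ ∘ det)(g)⁻¹` is an invariant complement of the line it spans.
-/

open Matrix

/-- The Borel subgroup of upper triangular matrices in `GL(2,F)`. -/
def Borel2 (F : Type*) [Field F] [DecidableEq F] : Subgroup (GL (Fin 2) F) where
  carrier := {g : GL (Fin 2) F |
    Matrix.BlockTriangular ((g : Matrix (Fin 2) (Fin 2) F)) id}
  one_mem' := by
    show Matrix.BlockTriangular (1 : Matrix (Fin 2) (Fin 2) F) id
    exact Matrix.blockTriangular_one
  mul_mem' := by intro a b ha hb; exact ha.mul hb
  inv_mem' := by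
    intro a ha
    show Matrix.BlockTriangular ((a⁻¹ : GL (Fin 2) F) : Matrix (Fin 2) (Fin 2) F) id
    have hco : ((a⁻¹ : GL (Fin 2) F) : Matrix (Fin 2) (Fin 2) F)
        = ((a : Matrix (Fin 2) (Fin 2) F))⁻¹ := Matrix.coe_units_inv _
    rw [hco]
    haveI : Invertible (a : Matrix (Fin 2) (Fin 2) F) := Units.invertible a
    exact Matrix.blockTriangular_inv_of_blockTriangular ha

/-- The principal series `μ₁ × μ₂ = Ind_B^{GL(2,𝔽_q)}(μ₁ ⊠ μ₂)`, realized as the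
space of functions `f : GL(2,𝔽_q) → ℂ` with `f(bg) = μ₁(b₀₀) μ₂(b₁₁) f(g)` for
upper triangular `b`. -/
noncomputable def principalSeries {F : Type*} [Field F] [DecidableEq F]
    (μ₁ μ₂ : Fˣ →* ℂˣ) : Submodule ℂ (GL (Fin 2) F → ℂ) where
  carrier := {f | ∀ b g : GL (Fin 2) F, b ∈ Borel2 F → ∀ u₁ u₂ : Fˣ,
    ((u₁ : F) = (b : Matrix (Fin 2) (Fin 2) F) 0 0) →
    ((u₂ : F) = (b : Matrix (Fin 2) (Fin 2) F) 1 1) →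
    f (b * g) = (μ₁ u₁ : ℂ) * (μ₂ u₂ : ℂ) * f g}
  add_mem' := by
    intro p q hp hq b g hb u₁ u₂ h₁ h₂
    simp only [Pi.add_apply, hp b g hb u₁ u₂ h₁ h₂, hq b g hb u₁ u₂ h₁ h₂]
    ring
  zero_mem' := by intro b g hb u₁ u₂ h₁ h₂; simp
  smul_mem' := by
    intro c p hp b g hb u₁ u₂ h₁ h₂
    simp only [Pi.smul_apply, hp b g hb u₁ u₂ h₁ h₂, smul_eq_mul]
    ring

/-- A submodule of functions on `GL(2,𝔽_q)` invariant under right translation. -/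
def IsRightInvariant {F : Type*} [Field F] [DecidableEq F]
    (W : Submodule ℂ (GL (Fin 2) F → ℂ)) : Prop :=
  ∀ k : GL (Fin 2) F, ∀ f ∈ W, (fun g => f (g * k)) ∈ W


section InducedSpace

variable {G : Type*} [Group G] (H : Subgroup G) (χ : H →* ℂˣ)

/-- `Ind_H^G χ`, on which `G` acts by right translation. -/
def inducedSpace : Submodule ℂ (G → ℂ) where
  carrier := {f | ∀ (h : H) (g : G), f (h * g) = χ h * f g}
  add_mem' hf hf' h g := by simp [hf h g, hf' h g, mul_add]
  zero_mem' := by simp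
  smul_mem' c f hf h g := by simp [hf h g, mul_left_comm]

open Classical in
noncomputable def inducedDelta : G → ℂ := fun g => if hg : g ∈ H then (χ ⟨g, hg⟩ : ℂ) else 0

variable {H χ}

lemma mul_right_mem_inducedSpace {f : G → ℂ} (hf : f ∈ inducedSpace H χ) (k : G) :
    (fun g => f (g * k)) ∈ inducedSpace H χ := fun h g => by
  simpa only [mul_assoc] using hf h (g * k)

lemma inducedDelta_of_mem (h : H) : inducedDelta H χ h = χ h := by
  simp [inducedDelta]

lemma inducedDelta_of_notMem {g : G} (hg : g ∉ H) : inducedDelta H χ g = 0 := by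
  simp [inducedDelta, hg]

lemma inducedDelta_one : inducedDelta H χ 1 = 1 := by
  simpa using inducedDelta_of_mem (χ := χ) 1

lemma inducedDelta_mem : inducedDelta H χ ∈ inducedSpace H χ := fun h g => by
  by_cases hg : g ∈ H
  · have := inducedDelta_of_mem (χ := χ) (h * ⟨g, hg⟩)
    rw [map_mul, Units.val_mul] at this
    simpa [inducedDelta_of_mem ⟨g, hg⟩] using this
  · rw [inducedDelta_of_notMem hg, inducedDelta_of_notMem fun h' => hg ?_, mul_zero]
    simpa using H.mul_mem (H.inv_mem h.2) h'

section Transversal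

variable {ι : Type*} {rep : ι → G}

variable (H) in
/-- `rep` is a system of representatives of the right cosets `H g`. -/
def IsRightTransversal (rep : ι → G) : Prop := ∀ g, ∃! i, g * (rep i)⁻¹ ∈ H

lemma eq_zero_of_forall_apply_rep_eq_zero (hrep : ∀ g, ∃ i, g * (rep i)⁻¹ ∈ H) {f : G → ℂ}
    (hf : f ∈ inducedSpace H χ) (hf0 : ∀ i, f (rep i) = 0) : f = 0 := by
  funext g
  obtain ⟨i, hi⟩ := hrep g
  simpa [hf0 i] using hf ⟨_, hi⟩ (rep i)

lemma inducedDelta_rep_mul_rep_inv [DecidableEq ι] (hrep : IsRightTransversal H rep)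
    (i j : ι) :
    inducedDelta H χ (rep j * (rep i)⁻¹) = if i = j then 1 else 0 := by
  split_ifs with hij
  · rw [hij, mul_inv_cancel, inducedDelta_one]
  · refine inducedDelta_of_notMem fun hji => hij ?_
    exact (hrep (rep j)).unique hji (by simp)

lemma eq_sum_smul_inducedDelta [Fintype ι] (hrep : IsRightTransversal H rep) {f : G → ℂ}
    (hf : f ∈ inducedSpace H χ) :
    f = ∑ i, f (rep i) • fun g => inducedDelta H χ (g * (rep i)⁻¹) := by
  rw [← sub_eq_zero]
  refine eq_zero_of_forall_apply_rep_eq_zero (fun g => (hrep g).exists) (sub_mem hf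
    (sum_mem fun i _ => Submodule.smul_mem _ _ (mul_right_mem_inducedSpace inducedDelta_mem _)))
    fun j => ?_
  classical
  simp [Finset.sum_apply, inducedDelta_rep_mul_rep_inv hrep]

theorem finrank_inducedSpace [Fintype ι] (hrep : IsRightTransversal H rep) :
    Module.finrank ℂ (inducedSpace H χ) = Fintype.card ι := by
  let evalRep : inducedSpace H χ →ₗ[ℂ] (ι → ℂ) :=
    LinearMap.pi fun i => (LinearMap.proj (rep i)).comp (inducedSpace H χ).subtype
  have hinj : Function.Injective evalRep := by
    refine (injective_iff_map_eq_zero _).2 fun f hf => Subtype.ext ?_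
    exact eq_zero_of_forall_apply_rep_eq_zero (fun g => (hrep g).exists) f.2 (congrFun hf)
  have hsurj : Function.Surjective evalRep := fun c => by
    refine ⟨⟨∑ i, c i • fun g => inducedDelta H χ (g * (rep i)⁻¹), sum_mem fun i _ =>
        Submodule.smul_mem _ _ (mul_right_mem_inducedSpace inducedDelta_mem _)⟩,
      funext fun j => ?_⟩
    classical
    simp [evalRep, Finset.sum_apply, inducedDelta_rep_mul_rep_inv hrep]
  rw [(LinearEquiv.ofBijective evalRep ⟨hinj, hsurj⟩).finrank_eq,
    Module.finrank_fintype_fun_eq_card]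

lemma inducedSpace_le_of_inducedDelta_mem [Finite ι] (hrep : IsRightTransversal H rep)
    {W : Submodule ℂ (G → ℂ)} (hW : ∀ k, ∀ f ∈ W, (fun g => f (g * k)) ∈ W)
    (hδ : inducedDelta H χ ∈ W) : inducedSpace H χ ≤ W := fun f hf => by
  have := Fintype.ofFinite ι
  rw [eq_sum_smul_inducedDelta hrep hf]
  exact sum_mem fun i _ => W.smul_mem _ (hW _ _ hδ)

end Transversal

variable (χ) in
noncomputable def twistedAverage [Fintype H] (f : G → ℂ) : G → ℂ :=
  ∑ h : H, (((χ h)⁻¹ : ℂˣ) : ℂ) • fun g => f (g * h)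

variable [Fintype H]

lemma twistedAverage_mul_right (f : G → ℂ) (b : H) (g : G) :
    twistedAverage χ f (g * b) = χ b * twistedAverage χ f g := by
  simp only [twistedAverage, Finset.sum_apply, Pi.smul_apply, smul_eq_mul, Finset.mul_sum]
  rw [← Equiv.sum_comp (Equiv.mulLeft b⁻¹)]
  refine Finset.sum_congr rfl fun h _ => ?_
  simp [mul_assoc, mul_left_comm]

lemma twistedAverage_one {f : G → ℂ} (hf : f ∈ inducedSpace H χ) :
    twistedAverage χ f 1 = Fintype.card H * f 1 := by
  have hfH (h : H) : f h = χ h * f 1 := by simpa using hf h 1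
  simp [twistedAverage, Finset.sum_apply, hfH]

lemma twistedAverage_mem {W : Submodule ℂ (G → ℂ)}
    (hW : ∀ k, ∀ f ∈ W, (fun g => f (g * k)) ∈ W) {f : G → ℂ} (hf : f ∈ W) :
    twistedAverage χ f ∈ W :=
  sum_mem fun h _ => W.smul_mem _ (hW h f hf)

end InducedSpace

section Character

variable {G : Type*} [Group G] (ψ : G →* ℂˣ)

lemma character_mem_inducedSpace (H : Subgroup G) :
    (fun g => (ψ g : ℂ)) ∈ inducedSpace H (ψ.comp H.subtype) := fun h g => by
  simp

lemma character_ne_zero : (fun g => (ψ g : ℂ)) ≠ 0 :=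
  fun h => (ψ 1).ne_zero (congrFun h 1)

lemma mem_span_character_mul_right {f : G → ℂ} (hf : f ∈ ℂ ∙ fun g => (ψ g : ℂ)) (k : G) :
    (fun g => f (g * k)) ∈ ℂ ∙ fun g => (ψ g : ℂ) := by
  obtain ⟨c, rfl⟩ := Submodule.mem_span_singleton.1 hf
  refine Submodule.mem_span_singleton.2 ⟨c * ψ k, funext fun g => ?_⟩
  simp only [map_mul, Units.val_mul, Pi.smul_apply, smul_eq_mul]
  ring

variable [Fintype G]

noncomputable def characterPairing : (G → ℂ) →ₗ[ℂ] ℂ where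
  toFun f := ∑ g, f g * ((ψ g)⁻¹ : ℂˣ)
  map_add' f f' := by simp [add_mul, Finset.sum_add_distrib]
  map_smul' c f := by simp [Finset.mul_sum, mul_assoc]

lemma characterPairing_mul_right (f : G → ℂ) (k : G) :
    characterPairing ψ (fun g => f (g * k)) = ψ k * characterPairing ψ f := by
  simp only [characterPairing, LinearMap.coe_mk, AddHom.coe_mk, Finset.mul_sum]
  rw [← Equiv.sum_comp (Equiv.mulRight k⁻¹)]
  refine Finset.sum_congr rfl fun g _ => ?_
  simp [mul_left_comm]

lemma characterPairing_character :
    characterPairing ψ (fun g => (ψ g : ℂ)) = Fintype.card G := by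
  simp [characterPairing]

theorem exists_invariant_compl_span_character {V : Submodule ℂ (G → ℂ)}
    (hV : ∀ k, ∀ f ∈ V, (fun g => f (g * k)) ∈ V) (hψ : (fun g => (ψ g : ℂ)) ∈ V) :
    ∃ W ≤ V, (∀ k, ∀ f ∈ W, (fun g => f (g * k)) ∈ W) ∧
      (ℂ ∙ fun g => (ψ g : ℂ)) ⊔ W = V ∧ (ℂ ∙ fun g => (ψ g : ℂ)) ⊓ W = ⊥ := by
  have hpair : characterPairing ψ (fun g => (ψ g : ℂ)) ≠ 0 := by
    simp [characterPairing_character]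
  have hcompl : IsCompl (LinearMap.ker (characterPairing ψ)) (ℂ ∙ fun g => (ψ g : ℂ)) :=
    Submodule.isCompl_span_singleton_of_isCoatom_of_notMem
      (LinearMap.isCoatom_ker_of_surjective <|
        LinearMap.surjective fun h => hpair (by rw [h]; rfl)) hpair
  refine ⟨LinearMap.ker (characterPairing ψ) ⊓ V, inf_le_right, fun k f hf => ⟨?_, hV k f hf.2⟩,
    ?_, ?_⟩
  · simp [LinearMap.mem_ker, characterPairing_mul_right, LinearMap.mem_ker.1 hf.1]
  · rw [← sup_inf_assoc_of_le _ (Submodule.span_le.2 (Set.singleton_subset_iff.2 hψ)),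
      sup_comm, hcompl.sup_eq_top, top_inf_eq]
  · exact eq_bot_iff.2 (le_trans (inf_le_inf_left _ inf_le_left) hcompl.symm.inf_eq_bot.le)

end Character

section GL2

variable {F : Type*} [Field F] [DecidableEq F]

lemma mem_borel2_iff {g : GL (Fin 2) F} :
    g ∈ Borel2 F ↔ (g : Matrix (Fin 2) (Fin 2) F) 1 0 = 0 := by
  refine ⟨fun h => h (show id (0 : Fin 2) < id 1 by decide), fun h i j hij => ?_⟩
  fin_cases i <;> fin_cases j <;> simp_all

lemma Borel2.diag_ne_zero (b : Borel2 F) (i : Fin 2) :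
    ((b : GL (Fin 2) F) : Matrix (Fin 2) (Fin 2) F) i i ≠ 0 := by
  have hdet := (Matrix.isUnit_iff_isUnit_det _).1 (b : GL (Fin 2) F).isUnit
  rw [det_of_isUpperTriangular b.2] at hdet
  exact Finset.prod_ne_zero_iff.1 hdet.ne_zero i (Finset.mem_univ _)

def Borel2.diag (i : Fin 2) : Borel2 F →* Fˣ where
  toFun b := Units.mk0 _ (Borel2.diag_ne_zero b i)
  map_one' := Units.ext (by simp)
  map_mul' b b' := Units.ext <| by
    have hb := mem_borel2_iff.1 b.2
    have hb' := mem_borel2_iff.1 b'.2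
    fin_cases i <;> simp [Matrix.mul_apply, Fin.sum_univ_two, hb, hb']

/-- The character `μ₁ ⊠ μ₂` of the Borel subgroup. -/
def borelChar (μ₁ μ₂ : Fˣ →* ℂˣ) : Borel2 F →* ℂˣ :=
  μ₁.comp (Borel2.diag 0) * μ₂.comp (Borel2.diag 1)

lemma principalSeries_eq_inducedSpace (μ₁ μ₂ : Fˣ →* ℂˣ) :
    principalSeries μ₁ μ₂ = inducedSpace (Borel2 F) (borelChar μ₁ μ₂) := by
  ext f
  refine ⟨fun hf b g => hf b g b.2 _ _ rfl rfl, fun hf b g hb u₁ u₂ h₁ h₂ => ?_⟩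
  obtain rfl : u₁ = Borel2.diag 0 ⟨b, hb⟩ := Units.ext h₁
  obtain rfl : u₂ = Borel2.diag 1 ⟨b, hb⟩ := Units.ext h₂
  exact hf ⟨b, hb⟩ g

lemma isRightInvariant_principalSeries (μ₁ μ₂ : Fˣ →* ℂˣ) :
    IsRightInvariant (principalSeries (F := F) μ₁ μ₂) := fun k f hf => by
  rw [principalSeries_eq_inducedSpace] at hf ⊢
  exact mul_right_mem_inducedSpace hf k

lemma borelChar_self (μ : Fˣ →* ℂˣ) :
    borelChar μ μ = (μ.comp Matrix.GeneralLinearGroup.det).comp (Borel2 F).subtype := by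
  ext b
  have hdet : Matrix.GeneralLinearGroup.det (b : GL (Fin 2) F) =
      Borel2.diag 0 b * Borel2.diag 1 b :=
    Units.ext (by simp [Borel2.diag, det_of_isUpperTriangular b.2, Fin.prod_univ_two])
  simp [borelChar, hdet]

lemma det_character_mem_principalSeries (μ : Fˣ →* ℂˣ) :
    (fun g : GL (Fin 2) F => (μ (Matrix.GeneralLinearGroup.det g) : ℂ)) ∈ principalSeries μ μ := by
  rw [principalSeries_eq_inducedSpace, borelChar_self]
  exact character_mem_inducedSpace (μ.comp Matrix.GeneralLinearGroup.det) _

noncomputable def Borel2.mk (a d : Fˣ) (c : F) : Borel2 F :=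
  ⟨.mkOfDetNeZero !![(a : F), c; 0, (d : F)] (by simp [det_fin_two]), mem_borel2_iff.2 rfl⟩

lemma borelChar_mk (μ₁ μ₂ : Fˣ →* ℂˣ) (a d : Fˣ) (c : F) :
    borelChar μ₁ μ₂ (Borel2.mk a d c) = μ₁ a * μ₂ d := by
  have h₀ : Borel2.diag 0 (Borel2.mk a d c) = a := Units.ext rfl
  have h₁ : Borel2.diag 1 (Borel2.mk a d c) = d := Units.ext rfl
  simp [borelChar, h₀, h₁]

def bigCellRep (x : F) : GL (Fin 2) F :=
  ⟨!![0, 1; 1, x], !![-x, 1; 1, 0],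
    by ext i j; fin_cases i <;> fin_cases j <;> simp [Matrix.mul_apply, Fin.sum_univ_two],
    by ext i j; fin_cases i <;> fin_cases j <;> simp [Matrix.mul_apply, Fin.sum_univ_two]⟩

/-- Representatives of `B \ GL(2,F)`, indexed by `P¹(F) = Option F`. -/
def p1Rep : Option F → GL (Fin 2) F
  | none => 1
  | some x => bigCellRep x

lemma bigCellRep_notMem_borel2 (x : F) : bigCellRep x ∉ Borel2 F := by
  simp [mem_borel2_iff, bigCellRep]

lemma mul_inv_bigCellRep_mem_borel2_iff (g : GL (Fin 2) F) (x : F) :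
    g * (bigCellRep x)⁻¹ ∈ Borel2 F ↔
      x * (g : Matrix (Fin 2) (Fin 2) F) 1 0 = (g : Matrix (Fin 2) (Fin 2) F) 1 1 := by
  rw [mem_borel2_iff, Units.val_mul]
  simp [bigCellRep, Matrix.mul_apply, Fin.sum_univ_two, neg_add_eq_zero, mul_comm]

lemma isRightTransversal_p1Rep : IsRightTransversal (Borel2 F) (p1Rep (F := F)) := by
  intro g
  have hdet := (Matrix.isUnit_iff_isUnit_det _).1 g.isUnit
  rw [Matrix.det_fin_two] at hdet
  by_cases hc : (g : Matrix (Fin 2) (Fin 2) F) 1 0 = 0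
  · refine ⟨none, by simpa [p1Rep, mem_borel2_iff], ?_⟩
    rintro (_ | x) h
    · rfl
    · simp only [p1Rep, mul_inv_bigCellRep_mem_borel2_iff, hc, mul_zero] at h
      simp [hc, ← h] at hdet
  · refine ⟨some ((g : Matrix (Fin 2) (Fin 2) F) 1 1 / (g : Matrix (Fin 2) (Fin 2) F) 1 0),
      by simp only [p1Rep, mul_inv_bigCellRep_mem_borel2_iff, div_mul_cancel₀ _ hc], ?_⟩
    rintro (_ | x) h
    · simp [p1Rep, mem_borel2_iff, hc] at h
    · simp only [p1Rep, mul_inv_bigCellRep_mem_borel2_iff] at h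
      rw [eq_div_of_mul_eq hc h]

theorem finrank_principalSeries [Fintype F] (μ₁ μ₂ : Fˣ →* ℂˣ) :
    Module.finrank ℂ (principalSeries (F := F) μ₁ μ₂) = Fintype.card F + 1 := by
  rw [principalSeries_eq_inducedSpace,
    finrank_inducedSpace isRightTransversal_p1Rep, Fintype.card_option]

end GL2

section Irreducibility

variable {F : Type*} [Field F] [DecidableEq F]

lemma bigCellRep_zero_mul_mk_diag (a : Fˣ) :
    bigCellRep (0 : F) * (Borel2.mk a 1 0 : GL (Fin 2) F) =
      (Borel2.mk 1 a 0 : GL (Fin 2) F) * bigCellRep 0 := by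
  ext i j
  fin_cases i <;> fin_cases j <;>
    simp [bigCellRep, Borel2.mk, Matrix.mul_apply, Fin.sum_univ_two]

lemma bigCellRep_zero_mul_mk_unipotent (x : F) :
    bigCellRep (0 : F) * (Borel2.mk 1 1 x : GL (Fin 2) F) = bigCellRep x := by
  ext i j
  fin_cases i <;> fin_cases j <;>
    simp [bigCellRep, Borel2.mk, Matrix.mul_apply, Fin.sum_univ_two]

lemma eq_smul_inducedDelta_of_mul_right {μ₁ μ₂ : Fˣ →* ℂˣ} (hμ : μ₁ ≠ μ₂) {f : GL (Fin 2) F → ℂ}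
    (hf : f ∈ inducedSpace (Borel2 F) (borelChar μ₁ μ₂))
    (hfB : ∀ (b : Borel2 F) g, f (g * b) = borelChar μ₁ μ₂ b * f g) :
    f = f 1 • inducedDelta (Borel2 F) (borelChar μ₁ μ₂) := by
  obtain ⟨a, ha⟩ : ∃ a, μ₁ a ≠ μ₂ a := DFunLike.ne_iff.1 hμ
  have hw₀ : f (bigCellRep 0) = 0 := by
    have h := hf (Borel2.mk 1 a 0) (bigCellRep 0)
    rw [← bigCellRep_zero_mul_mk_diag, hfB, borelChar_mk, borelChar_mk] at h
    simp only [map_one, one_mul, mul_one] at h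
    exact (mul_eq_mul_right_iff.1 h).resolve_left fun h' => ha (Units.ext h')
  have hw (x : F) : f (bigCellRep x) = 0 := by
    rw [← bigCellRep_zero_mul_mk_unipotent, hfB, hw₀, mul_zero]
  rw [← sub_eq_zero]
  refine eq_zero_of_forall_apply_rep_eq_zero (fun g => (isRightTransversal_p1Rep g).exists)
    (sub_mem hf (Submodule.smul_mem _ _ inducedDelta_mem)) ?_
  rintro (_ | x)
  · simp [p1Rep, inducedDelta_one]
  · simp [p1Rep, hw x, inducedDelta_of_notMem (bigCellRep_notMem_borel2 x)]

theorem eq_bot_or_eq_principalSeries [Fintype F] {μ₁ μ₂ : Fˣ →* ℂˣ} (hμ : μ₁ ≠ μ₂)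
    {W : Submodule ℂ (GL (Fin 2) F → ℂ)} (hle : W ≤ principalSeries μ₁ μ₂)
    (hW : IsRightInvariant W) : W = ⊥ ∨ W = principalSeries μ₁ μ₂ := by
  classical
  rw [principalSeries_eq_inducedSpace] at hle ⊢
  refine or_iff_not_imp_left.2 fun hne => le_antisymm hle <|
    inducedSpace_le_of_inducedDelta_mem isRightTransversal_p1Rep hW ?_
  obtain ⟨w, hwW, hw⟩ := Submodule.exists_mem_ne_zero_of_ne_bot hne
  obtain ⟨g, hg : w g ≠ 0⟩ := Function.ne_iff.1 hw
  -- the average of a translate of `w` with nonzero value at `1` is a nonzero `B`-eigenvector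
  let v := twistedAverage (borelChar μ₁ μ₂) fun x => w (x * g)
  have hvW : v ∈ W := twistedAverage_mem hW (hW g w hwW)
  have hv1 : v 1 ≠ 0 := by
    rw [show v 1 = _ from twistedAverage_one (hle (hW g w hwW)), one_mul]
    exact mul_ne_zero (Nat.cast_ne_zero.2 Fintype.card_ne_zero) hg
  have hv : v = v 1 • inducedDelta (Borel2 F) (borelChar μ₁ μ₂) :=
    eq_smul_inducedDelta_of_mul_right hμ (hle hvW) (twistedAverage_mul_right _)
  rw [← inv_smul_smul₀ hv1 (inducedDelta _ _), ← hv]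
  exact W.smul_mem _ hvW

end Irreducibility

theorem exists_decomposition_principalSeries_self {F : Type*} [Field F] [Fintype F]
    [DecidableEq F] (μ : Fˣ →* ℂˣ) :
    ∃ W₁ W₂ : Submodule ℂ (GL (Fin 2) F → ℂ),
      W₁ ≤ principalSeries μ μ ∧ W₂ ≤ principalSeries μ μ ∧
      IsRightInvariant W₁ ∧ IsRightInvariant W₂ ∧
      W₁ ⊔ W₂ = principalSeries μ μ ∧ W₁ ⊓ W₂ = ⊥ ∧
      Module.finrank ℂ W₁ = 1 ∧ Module.finrank ℂ W₂ = Fintype.card F ∧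
      (fun g : GL (Fin 2) F => (μ (Matrix.GeneralLinearGroup.det g) : ℂ)) ∈ W₁ := by
  let ψ := μ.comp (Matrix.GeneralLinearGroup.det (n := Fin 2) (R := F))
  obtain ⟨W, hWle, hW, hsup, hinf⟩ := exists_invariant_compl_span_character ψ
    (isRightInvariant_principalSeries μ μ) (det_character_mem_principalSeries μ)
  have hrank₁ := finrank_span_singleton (K := ℂ) (character_ne_zero ψ)
  have hrank := Submodule.finrank_sup_add_finrank_inf_eq (ℂ ∙ fun g => (ψ g : ℂ)) W
  rw [hsup, hinf, finrank_bot, finrank_principalSeries, hrank₁] at hrank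
  exact ⟨_, W, Submodule.span_le.2 <| Set.singleton_subset_iff.2 <|
      det_character_mem_principalSeries μ, hWle, fun k f hf => mem_span_character_mul_right ψ hf k,
    hW, hsup, hinf, hrank₁, by omega, Submodule.mem_span_singleton_self _⟩

/-- The principal series `μ₁ × μ₂` of `GL(2,𝔽_q)` has dimension `q+1`; it is
irreducible iff `μ₁ ≠ μ₂`; for `μ₁ = μ₂` it is the direct sum of the
one-dimensional representation `μ₁ ∘ det` and a `q`-dimensional representation. -/
theorem stmt15 {F : Type*} [Field F] [Fintype F] [DecidableEq F] (q : ℕ)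
    (hq : Fintype.card F = q) (μ₁ μ₂ : Fˣ →* ℂˣ) :
    Module.finrank ℂ (principalSeries (F := F) μ₁ μ₂) = q + 1 ∧
    ((∀ W : Submodule ℂ (GL (Fin 2) F → ℂ), W ≤ principalSeries μ₁ μ₂ →
        IsRightInvariant W → W = ⊥ ∨ W = principalSeries μ₁ μ₂) ↔ μ₁ ≠ μ₂) ∧
    (μ₁ = μ₂ → ∃ W₁ W₂ : Submodule ℂ (GL (Fin 2) F → ℂ),
      W₁ ≤ principalSeries μ₁ μ₂ ∧ W₂ ≤ principalSeries μ₁ μ₂ ∧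
      IsRightInvariant W₁ ∧ IsRightInvariant W₂ ∧
      W₁ ⊔ W₂ = principalSeries μ₁ μ₂ ∧ W₁ ⊓ W₂ = ⊥ ∧
      Module.finrank ℂ W₁ = 1 ∧ Module.finrank ℂ W₂ = q ∧
      (fun g : GL (Fin 2) F => (μ₁ (Matrix.GeneralLinearGroup.det g) : ℂ)) ∈ W₁) := by
  subst hq
  refine ⟨finrank_principalSeries μ₁ μ₂,
    ⟨fun hirr hμ => ?_, fun hμ W hle hW => eq_bot_or_eq_principalSeries hμ hle hW⟩,
    fun hμ => hμ ▸ exists_decomposition_principalSeries_self μ₁⟩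
  subst hμ
  obtain ⟨W₁, -, hle, -, hW, -, -, -, hrank, -, -⟩ := exists_decomposition_principalSeries_self μ₁
  rcases hirr W₁ hle hW with rfl | rfl
  · simp at hrank
  · rw [finrank_principalSeries] at hrank
    exact Fintype.card_ne_zero (α := F) (by omega)
end
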